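/- arXiv:1604.05402 — 4 statements merged into one kernel-verified Lean document; each statement's English description precedes it below -/
import Mathlib

section
/- Let d ≥ 1, let Ω ⊆ ℝ^d be a nonempty bounded open set, let ε > 0 and 0 < k ≤ ε², and fix w ∈ V. Then the discrete Allen–Cahn energy E(u) = ∫_Ω ( (1/2)|∇u(x)|² + (1/ε²)F(u(x)) + (1/(2k))(u(x) − w(x))² ) dx is strictly convex on V: for all u₁, u₂ ∈ V whose restrictions to Ω are not equal and all t ∈ (0,1), E(t u₁ + (1−t) u₂) < t E(u₁) + (1−t) E(u₂). -/
/-!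
Pointwise, the integrand is `½‖∇u‖² + φ(u)` with `φ(v) = F(v)/ε² + (v - w)²/(2k)`. The first term
is convex in `∇u`, which depends linearly on `u`. Since
`φ(v) = v⁴/(4ε²) + (1/(2k) - 1/(2ε²)) v² + (affine in v)`, the condition `k ≤ ε²` makes `φ`
strictly convex: the quadratic term absorbs the concave part of the double well. Hence the
integrand at a convex combination lies below the combination of the integrands, strictly where
`u₁ ≠ u₂`; by continuity this strict gap persists on a nonempty open subset of `Ω`, which has
positive measure.
-/

open MeasureTheory Set InnerProductSpace

theorem convexOn_half_norm_sq {E : Type*} [NormedAddCommGroup E] [NormedSpace ℝ E] :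
    ConvexOn ℝ univ fun v : E => 1 / 2 * ‖v‖ ^ 2 :=
  ((convexOn_norm convex_univ).pow (fun _ _ => norm_nonneg _) 2).smul (by norm_num)

theorem strictConvexOn_doubleWell_add_sq {P Q : ℝ} (c : ℝ) (hP : 0 < P) (hPQ : P ≤ 2 * Q) :
    StrictConvexOn ℝ univ fun v : ℝ => P * (1 / 4 * (v ^ 2 - 1) ^ 2) + Q * (v - c) ^ 2 := by
  refine ⟨convex_univ, fun a _ b _ hab s t hs ht hst => ?_⟩
  have h4 := (Even.strictConvexOn_pow (by decide : Even 4) four_ne_zero).2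
    (mem_univ a) (mem_univ b) hab hs ht hst
  have h2 := ((Even.strictConvexOn_pow even_two two_ne_zero).2
    (mem_univ a) (mem_univ b) hab hs ht hst).le
  simp only [smul_eq_mul] at h4 h2 ⊢
  obtain rfl : t = 1 - s := by linarith
  nlinarith [mul_lt_mul_of_pos_left h4 hP,
    mul_le_mul_of_nonneg_left h2 (by linarith : (0 : ℝ) ≤ 2 * Q - P)]

theorem IsOpen.setIntegral_lt_setIntegral {X : Type*} [TopologicalSpace X] [MeasurableSpace X]
    [OpensMeasurableSpace X] {μ : Measure X} [μ.IsOpenPosMeasure] {U : Set X} (hU : IsOpen U)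
    {f g : X → ℝ} (hf : IntegrableOn f U μ) (hg : IntegrableOn g U μ)
    (hfc : ContinuousOn f U) (hgc : ContinuousOn g U) (hle : ∀ x ∈ U, f x ≤ g x)
    {x₀ : X} (hx₀ : x₀ ∈ U) (hlt : f x₀ < g x₀) :
    ∫ x in U, f x ∂μ < ∫ x in U, g x ∂μ := by
  have hpos : 0 < ∫ x in U, (g x - f x) ∂μ := by
    refine (setIntegral_pos_iff_support_of_nonneg_ae (f := fun x => g x - f x) ?_
      (hg.sub hf)).2 ?_
    · filter_upwards [ae_restrict_mem hU.measurableSet] with x hx using sub_nonneg.2 (hle x hx)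
    · have hopen : IsOpen (U ∩ (fun x => g x - f x) ⁻¹' Ioi 0) :=
        (hgc.sub hfc).isOpen_inter_preimage hU isOpen_Ioi
      refine (hopen.measure_pos μ ⟨x₀, hx₀, sub_pos.2 hlt⟩).trans_le (measure_mono ?_)
      rintro x ⟨hxU, hx⟩
      exact ⟨ne_of_gt hx, hxU⟩
  rw [integral_sub hg hf] at hpos
  linarith

section

variable {F : Type*} [NormedAddCommGroup F] [InnerProductSpace ℝ F] [CompleteSpace F]

theorem gradient_const_mul_add_const_mul {f g : F → ℝ} {x : F} (hf : DifferentiableAt ℝ f x)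
    (hg : DifferentiableAt ℝ g x) (a b : ℝ) :
    gradient (fun y => a * f y + b * g y) x = a • gradient f x + b • gradient g x := by
  apply (toDual ℝ F).injective
  rw [toDual_gradient, fderiv_fun_add (hf.const_mul a) (hg.const_mul b), fderiv_const_mul hf,
    fderiv_const_mul hg]
  simp [toDual_gradient]

theorem ContDiff.continuous_gradient {f : F → ℝ} (hf : ContDiff ℝ 1 f) : Continuous (gradient f) :=
  (toDual ℝ F).symm.continuous.comp (hf.continuous_fderiv one_ne_zero)

noncomputable def allenCahnDensity (ε k : ℝ) (w u : F → ℝ) (x : F) : ℝ :=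
  1 / 2 * ‖gradient u x‖ ^ 2 + 1 / ε ^ 2 * (1 / 4 * ((u x) ^ 2 - 1) ^ 2)
    + 1 / (2 * k) * (u x - w x) ^ 2

theorem continuous_allenCahnDensity {ε k : ℝ} {w u : F → ℝ} (hw : Continuous w)
    (hu : ContDiff ℝ 1 u) : Continuous (allenCahnDensity ε k w u) := by
  have := hu.continuous_gradient
  have := hu.continuous
  unfold allenCahnDensity
  fun_prop

theorem strictConvexOn_allenCahnPotential {ε k : ℝ} (c : ℝ) (hk0 : 0 < k) (hk : k ≤ ε ^ 2) :
    StrictConvexOn ℝ univ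
      fun v : ℝ => 1 / ε ^ 2 * (1 / 4 * (v ^ 2 - 1) ^ 2) + 1 / (2 * k) * (v - c) ^ 2 := by
  refine strictConvexOn_doubleWell_add_sq c (one_div_pos.2 (hk0.trans_le hk)) ?_
  rw [show 2 * (1 / (2 * k)) = 1 / k by field_simp]
  exact one_div_le_one_div_of_le hk0 hk

theorem allenCahnDensity_convexComb_le {ε k t : ℝ} {w u₁ u₂ : F → ℝ} {x : F} (hk0 : 0 < k)
    (hk : k ≤ ε ^ 2) (hu₁ : DifferentiableAt ℝ u₁ x) (hu₂ : DifferentiableAt ℝ u₂ x)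
    (ht : t ∈ Icc (0 : ℝ) 1) :
    allenCahnDensity ε k w (fun y => t * u₁ y + (1 - t) * u₂ y) x
      ≤ t * allenCahnDensity ε k w u₁ x + (1 - t) * allenCahnDensity ε k w u₂ x := by
  have hgrad := convexOn_half_norm_sq.2 (mem_univ (gradient u₁ x)) (mem_univ (gradient u₂ x))
    ht.1 (sub_nonneg.2 ht.2) (add_sub_cancel t 1)
  have hpot := (strictConvexOn_allenCahnPotential (w x) hk0 hk).convexOn.2 (mem_univ (u₁ x))
    (mem_univ (u₂ x)) ht.1 (sub_nonneg.2 ht.2) (add_sub_cancel t 1)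
  simp only [smul_eq_mul] at hgrad hpot
  simp only [allenCahnDensity, gradient_const_mul_add_const_mul hu₁ hu₂]
  linarith

theorem allenCahnDensity_convexComb_lt {ε k t : ℝ} {w u₁ u₂ : F → ℝ} {x : F} (hk0 : 0 < k)
    (hk : k ≤ ε ^ 2) (hu₁ : DifferentiableAt ℝ u₁ x) (hu₂ : DifferentiableAt ℝ u₂ x)
    (hne : u₁ x ≠ u₂ x) (ht : t ∈ Ioo (0 : ℝ) 1) :
    allenCahnDensity ε k w (fun y => t * u₁ y + (1 - t) * u₂ y) x
      < t * allenCahnDensity ε k w u₁ x + (1 - t) * allenCahnDensity ε k w u₂ x := by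
  have hgrad := convexOn_half_norm_sq.2 (mem_univ (gradient u₁ x)) (mem_univ (gradient u₂ x))
    ht.1.le (sub_nonneg.2 ht.2.le) (add_sub_cancel t 1)
  have hpot := (strictConvexOn_allenCahnPotential (w x) hk0 hk).2 (mem_univ (u₁ x))
    (mem_univ (u₂ x)) hne ht.1 (sub_pos.2 ht.2) (add_sub_cancel t 1)
  simp only [smul_eq_mul] at hgrad hpot
  simp only [allenCahnDensity, gradient_const_mul_add_const_mul hu₁ hu₂]
  linarith

end

theorem stmt_0_general (d : ℕ)
    (Ω : Set (EuclideanSpace ℝ (Fin d)))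
    (hΩbd : Bornology.IsBounded Ω) (hΩop : IsOpen Ω)
    (ε k : ℝ) (hk0 : 0 < k) (hk : k ≤ ε ^ 2)
    (w : EuclideanSpace ℝ (Fin d) → ℝ) (hw : ContDiff ℝ 1 w)
    (E : (EuclideanSpace ℝ (Fin d) → ℝ) → ℝ)
    (hE : ∀ u, E u = ∫ x in Ω,
      (1 / 2 * ‖gradient u x‖ ^ 2
        + 1 / ε ^ 2 * (1 / 4 * ((u x) ^ 2 - 1) ^ 2)
        + 1 / (2 * k) * (u x - w x) ^ 2))
    (u₁ u₂ : EuclideanSpace ℝ (Fin d) → ℝ)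
    (hu₁ : ContDiff ℝ 1 u₁) (hu₂ : ContDiff ℝ 1 u₂)
    (hne : ¬ Set.EqOn u₁ u₂ Ω)
    (t : ℝ) (ht : t ∈ Set.Ioo (0 : ℝ) 1) :
    E (fun x => t * u₁ x + (1 - t) * u₂ x) < t * E u₁ + (1 - t) * E u₂ := by
  obtain ⟨x₀, hx₀, hne⟩ : ∃ x ∈ Ω, u₁ x ≠ u₂ x := by simpa [Set.EqOn] using hne
  have hu : ContDiff ℝ 1 fun x => t * u₁ x + (1 - t) * u₂ x := by fun_prop
  have hint (f : EuclideanSpace ℝ (Fin d) → ℝ) (hf : Continuous f) : IntegrableOn f Ω :=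
    (hf.continuousOn.integrableOn_compact hΩbd.isCompact_closure).mono_set subset_closure
  have hc₁ := continuous_allenCahnDensity (ε := ε) (k := k) hw.continuous hu₁
  have hc₂ := continuous_allenCahnDensity (ε := ε) (k := k) hw.continuous hu₂
  have hI₁ := (hint _ hc₁).const_mul t
  have hI₂ := (hint _ hc₂).const_mul (1 - t)
  have hd₁ := hu₁.differentiable one_ne_zero
  have hd₂ := hu₂.differentiable one_ne_zero
  calc E (fun x => t * u₁ x + (1 - t) * u₂ x)
      = ∫ x in Ω, allenCahnDensity ε k w (fun y => t * u₁ y + (1 - t) * u₂ y) x := hE _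
    _ < ∫ x in Ω, (t * allenCahnDensity ε k w u₁ x + (1 - t) * allenCahnDensity ε k w u₂ x) :=
      hΩop.setIntegral_lt_setIntegral (hint _ (continuous_allenCahnDensity hw.continuous hu))
        (hI₁.add hI₂) (continuous_allenCahnDensity hw.continuous hu).continuousOn
        (by fun_prop) (fun x _ => allenCahnDensity_convexComb_le hk0 hk (hd₁ x) (hd₂ x)
          (Ioo_subset_Icc_self ht)) hx₀
        (allenCahnDensity_convexComb_lt hk0 hk (hd₁ x₀) (hd₂ x₀) hne ht)
    _ = t * E u₁ + (1 - t) * E u₂ := by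
      rw [integral_add hI₁ hI₂, integral_const_mul, integral_const_mul, hE, hE]
      rfl

/-- Strict convexity of the discrete (fully implicit) Allen–Cahn energy
`E(u) = ∫_Ω (½|∇u|² + (1/ε²)F(u) + (1/(2k))(u−w)²)` under `0 < k ≤ ε²`. -/
theorem stmt_0 (d : ℕ) (hd : 1 ≤ d)
    (Ω : Set (EuclideanSpace ℝ (Fin d))) (hΩne : Ω.Nonempty)
    (hΩbd : Bornology.IsBounded Ω) (hΩop : IsOpen Ω)
    (ε k : ℝ) (hε : 0 < ε) (hk0 : 0 < k) (hk : k ≤ ε ^ 2)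
    (w : EuclideanSpace ℝ (Fin d) → ℝ) (hw : ContDiff ℝ 1 w)
    (E : (EuclideanSpace ℝ (Fin d) → ℝ) → ℝ)
    (hE : ∀ u, E u = ∫ x in Ω,
      (1 / 2 * ‖gradient u x‖ ^ 2
        + 1 / ε ^ 2 * (1 / 4 * ((u x) ^ 2 - 1) ^ 2)
        + 1 / (2 * k) * (u x - w x) ^ 2))
    (u₁ u₂ : EuclideanSpace ℝ (Fin d) → ℝ)
    (hu₁ : ContDiff ℝ 1 u₁) (hu₂ : ContDiff ℝ 1 u₂)
    (hne : ¬ Set.EqOn u₁ u₂ Ω)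
    (t : ℝ) (ht : t ∈ Set.Ioo (0 : ℝ) 1) :
    E (fun x => t * u₁ x + (1 - t) * u₂ x) < t * E u₁ + (1 - t) * E u₂ :=
  stmt_0_general d Ω hΩbd hΩop ε k hk0 hk w hw E hE u₁ u₂ hu₁ hu₂ hne t ht
end

section
/- Let d ≥ 1, let Ω ⊆ ℝ^d be a nonempty bounded open set, let ε > 0 and k > 0, and let u, w ∈ V. If the convex-splitting equation tested with u − w holds, i.e. (1/k)∫_Ω (u − w)² dx + ∫_Ω ⟨∇u, ∇(u − w)⟩ dx + (1/ε²)∫_Ω (u³ − w)(u − w) dx = 0, then J_ε(u) ≤ J_ε(w). (In fact J_ε(u) + (1/k)∫_Ω (u − w)² dx ≤ J_ε(w).) -/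
/-!
Both halves of the energy are split into an implicitly and an explicitly treated part whose
difference quotients bound the energy increment from above: for the Dirichlet energy,
`½‖a‖² - ½‖b‖² = ⟪a, a - b⟫ - ½‖a - b‖²`; for the double well
`F(p) = p⁴/4 - p²/2 + 1/4`, the convex part `p⁴/4` is tested with its derivative `p³` at the new
value and the concave part `-p²/2` with its derivative `-q` at the old one. Integrating these
pointwise inequalities, the scheme identity turns the right-hand side into
`-(1/k) ∫ (u - w)²`, which is nonpositive.
-/

open MeasureTheory Set RealInnerProductSpace

section Gradient

variable {E : Type*} [NormedAddCommGroup E] [InnerProductSpace ℝ E] [CompleteSpace E]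
  {u w : E → ℝ}

theorem ContDiff.continuous_gradient_s3 (hu : ContDiff ℝ 1 u) : Continuous (gradient u) :=
  (InnerProductSpace.toDual ℝ E).symm.continuous.comp (hu.continuous_fderiv one_ne_zero)

theorem gradient_fun_sub {x : E} (hu : DifferentiableAt ℝ u x) (hw : DifferentiableAt ℝ w x) :
    gradient (fun y => u y - w y) x = gradient u x - gradient w x := by
  simp only [gradient, fderiv_fun_sub hu hw, map_sub]

end Gradient

theorem Continuous.integrableOn_of_isBounded {X F : Type*} [MetricSpace X] [ProperSpace X]
    [MeasurableSpace X] [OpensMeasurableSpace X] [NormedAddCommGroup F]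
    {μ : Measure X} [IsFiniteMeasureOnCompacts μ] {f : X → F} (hf : Continuous f)
    {s : Set X} (hs : Bornology.IsBounded s) : IntegrableOn f s μ :=
  (hf.continuousOn.integrableOn_compact hs.isCompact_closure).mono_set subset_closure

section ConvexSplitting

variable {E : Type*} [NormedAddCommGroup E] [InnerProductSpace ℝ E]

theorem half_norm_sq_le_inner_sub_add (a b : E) :
    1 / 2 * ‖a‖ ^ 2 ≤ ⟪a, a - b⟫ + 1 / 2 * ‖b‖ ^ 2 := by
  have hab : ‖a - b‖ ^ 2 = ‖a‖ ^ 2 - 2 * ⟪a, b⟫ + ‖b‖ ^ 2 := norm_sub_sq_real a b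
  rw [inner_sub_right, real_inner_self_eq_norm_sq]
  nlinarith [sq_nonneg ‖a - b‖]

theorem doubleWell_le_convexSplitting (p q : ℝ) :
    1 / 4 * (p ^ 2 - 1) ^ 2 ≤ (p ^ 3 - q) * (p - q) + 1 / 4 * (q ^ 2 - 1) ^ 2 := by
  nlinarith [sq_nonneg (p - q), sq_nonneg (p + q), sq_nonneg (p ^ 2 - q ^ 2),
    sq_nonneg (p ^ 2 - p * q)]

theorem allenCahn_density_le_convexSplitting {c : ℝ} (hc : 0 ≤ c) (a b : E) (p q : ℝ) :
    1 / 2 * ‖a‖ ^ 2 + c * (1 / 4 * (p ^ 2 - 1) ^ 2)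
      ≤ ⟪a, a - b⟫ + c * ((p ^ 3 - q) * (p - q))
        + (1 / 2 * ‖b‖ ^ 2 + c * (1 / 4 * (q ^ 2 - 1) ^ 2)) := by
  have hF := mul_le_mul_of_nonneg_left (doubleWell_le_convexSplitting p q) hc
  linarith [half_norm_sq_le_inner_sub_add a b]

end ConvexSplitting

theorem stmt_3_general (d : ℕ)
    (Ω : Set (EuclideanSpace ℝ (Fin d)))
    (hΩbd : Bornology.IsBounded Ω)
    (ε k : ℝ) (hk0 : 0 < k)
    (J : (EuclideanSpace ℝ (Fin d) → ℝ) → ℝ)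
    (hJ : ∀ v, J v = ∫ x in Ω,
      (1 / 2 * ‖gradient v x‖ ^ 2 + 1 / ε ^ 2 * (1 / 4 * ((v x) ^ 2 - 1) ^ 2)))
    (u w : EuclideanSpace ℝ (Fin d) → ℝ)
    (hu : ContDiff ℝ 1 u) (hw : ContDiff ℝ 1 w)
    (hscheme : 1 / k * (∫ x in Ω, (u x - w x) ^ 2)
      + (∫ x in Ω, ⟪gradient u x, gradient (fun y => u y - w y) x⟫)
      + 1 / ε ^ 2 * (∫ x in Ω, ((u x) ^ 3 - w x) * (u x - w x)) = 0) :
    J u ≤ J w ∧ J u + 1 / k * (∫ x in Ω, (u x - w x) ^ 2) ≤ J w := by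
  have hgu := hu.continuous_gradient_s3
  have hgw := hw.continuous_gradient_s3
  have hguw := (hu.sub hw).continuous_gradient_s3
  have hint {f : EuclideanSpace ℝ (Fin d) → ℝ} (hf : Continuous f) : IntegrableOn f Ω :=
    hf.integrableOn_of_isBounded hΩbd
  have hle : J u ≤ (∫ x in Ω, ⟪gradient u x, gradient (fun y => u y - w y) x⟫)
      + 1 / ε ^ 2 * (∫ x in Ω, ((u x) ^ 3 - w x) * (u x - w x)) + J w := by
    rw [hJ, hJ, ← integral_const_mul, ← integral_add, ← integral_add]
    · refine integral_mono (hint (by fun_prop)) (hint (by fun_prop)) fun x => ?_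
      rw [gradient_fun_sub (hu.differentiable one_ne_zero x) (hw.differentiable one_ne_zero x)]
      exact allenCahn_density_le_convexSplitting (by positivity) _ _ _ _
    all_goals exact hint (by fun_prop)
  have hdiss : 0 ≤ 1 / k * (∫ x in Ω, (u x - w x) ^ 2) :=
    mul_nonneg (by positivity) (integral_nonneg fun x => sq_nonneg _)
  constructor <;> linarith

/-- Unconditional energy stability of the first-order convex splitting scheme
for the Allen–Cahn equation (Eyre's theorem). -/
theorem stmt_3 (d : ℕ) (hd : 1 ≤ d)
    (Ω : Set (EuclideanSpace ℝ (Fin d))) (hΩne : Ω.Nonempty)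
    (hΩbd : Bornology.IsBounded Ω) (hΩop : IsOpen Ω)
    (ε k : ℝ) (hε : 0 < ε) (hk0 : 0 < k)
    (J : (EuclideanSpace ℝ (Fin d) → ℝ) → ℝ)
    (hJ : ∀ v, J v = ∫ x in Ω,
      (1 / 2 * ‖gradient v x‖ ^ 2 + 1 / ε ^ 2 * (1 / 4 * ((v x) ^ 2 - 1) ^ 2)))
    (u w : EuclideanSpace ℝ (Fin d) → ℝ)
    (hu : ContDiff ℝ 1 u) (hw : ContDiff ℝ 1 w)
    (hscheme : 1 / k * (∫ x in Ω, (u x - w x) ^ 2)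
      + (∫ x in Ω, ⟪gradient u x, gradient (fun y => u y - w y) x⟫)
      + 1 / ε ^ 2 * (∫ x in Ω, ((u x) ^ 3 - w x) * (u x - w x)) = 0) :
    J u ≤ J w ∧ J u + 1 / k * (∫ x in Ω, (u x - w x) ^ 2) ≤ J w :=
  stmt_3_general d Ω hΩbd ε k hk0 J hJ u w hu hw hscheme
end

section
/- Let ι be a finite index set, let k > 0 and ε > 0, let m : ι → ℝ satisfy m(i) > 0 for all i, and let w : ι → ι → ℝ satisfy w(i,j) = w(j,i) ≥ 0 for all i, j. Suppose u, v : ι → ℝ satisfy, for every i ∈ ι, (m(i)/k)(u(i) − v(i)) + Σ_{j∈ι} w(i,j)(u(i) − u(j)) + (m(i)/ε²)(u(i)³ − u(i)) = 0. If |v(i)| ≤ 1 for all i ∈ ι, then |u(i)| ≤ 1 for all i ∈ ι. -/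
/-!
At a node where `u` is maximal every graph-Laplacian term `w i j * (u i - u j)` is nonnegative,
so if `u` exceeded `1` there, both the time-difference term `u - v` (as `v ≤ 1`) and the
reaction term `u³ - u` would be positive and the nodal equation could not balance.
The scheme is odd in `(u, v)`, so applying this to `(-u, -v)` gives the lower bound.
-/

open Finset

def IsAllenCahnStep {ι : Type*} [Fintype ι] (k ε : ℝ) (m : ι → ℝ) (w : ι → ι → ℝ)
    (u v : ι → ℝ) : Prop :=
  ∀ i, m i / k * (u i - v i) + (∑ j, w i j * (u i - u j)) + m i / ε ^ 2 * ((u i) ^ 3 - u i) = 0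

namespace IsAllenCahnStep

variable {ι : Type*} [Fintype ι] {k ε : ℝ} {m : ι → ℝ} {w : ι → ι → ℝ} {u v : ι → ℝ}

theorem neg (h : IsAllenCahnStep k ε m w u v) : IsAllenCahnStep k ε m w (-u) (-v) := by
  intro i
  have hsum : ∑ j, w i j * ((-u) i - (-u) j) = -∑ j, w i j * (u i - u j) := by
    rw [← sum_neg_distrib]
    exact sum_congr rfl fun j _ => by simp only [Pi.neg_apply]; ring
  rw [hsum]
  simp only [Pi.neg_apply]
  linear_combination -h i

end IsAllenCahnStep

theorem sum_mul_sub_nonneg_of_forall_le {ι : Type*} [Fintype ι] {w u : ι → ℝ} {a : ι}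
    (hw : ∀ j, 0 ≤ w j) (ha : ∀ j, u j ≤ u a) : 0 ≤ ∑ j, w j * (u a - u j) :=
  sum_nonneg fun j _ => mul_nonneg (hw j) (sub_nonneg.mpr (ha j))

theorem le_one_of_balance {x y c d L : ℝ} (hc : 0 < c) (hd : 0 < d) (hL : 0 ≤ L)
    (hbal : c * (x - y) + L + d * (x ^ 3 - x) = 0) (hy : y ≤ 1) : x ≤ 1 := by
  by_contra! hx
  have hcubic : 0 < x ^ 3 - x := by nlinarith [mul_pos (sub_pos.mpr hx) (by linarith : 0 < x + 1)]
  nlinarith [mul_pos hc (by linarith : 0 < x - y), mul_pos hd hcubic]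

theorem IsAllenCahnStep.le_one {ι : Type*} [Fintype ι] {k ε : ℝ} (hk : 0 < k) (hε : 0 < ε)
    {m : ι → ℝ} (hm : ∀ i, 0 < m i) {w : ι → ι → ℝ} (hw : ∀ i j, 0 ≤ w i j) {u v : ι → ℝ}
    (h : IsAllenCahnStep k ε m w u v) (hv : ∀ i, v i ≤ 1) (i : ι) : u i ≤ 1 := by
  obtain ⟨a, -, ha⟩ := exists_max_image univ u ⟨i, mem_univ i⟩
  have hua : u a ≤ 1 :=
    le_one_of_balance (div_pos (hm a) hk) (div_pos (hm a) (pow_pos hε 2))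
      (sum_mul_sub_nonneg_of_forall_le (hw a) fun j => ha j (mem_univ j)) (h a) (hv a)
  exact (ha i (mem_univ i)).trans hua

theorem stmt_8_general (ι : Type*) [Fintype ι] (k ε : ℝ) (hk : 0 < k) (hε : 0 < ε)
    (m : ι → ℝ) (hm : ∀ i, 0 < m i)
    (w : ι → ι → ℝ) (hnn : ∀ i j, 0 ≤ w i j)
    (u v : ι → ℝ)
    (hscheme : ∀ i, m i / k * (u i - v i) + (∑ j, w i j * (u i - u j))
      + m i / ε ^ 2 * ((u i) ^ 3 - u i) = 0)
    (hv : ∀ i, |v i| ≤ 1) :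
    ∀ i, |u i| ≤ 1 := by
  have hstep : IsAllenCahnStep k ε m w u v := hscheme
  intro i
  rw [abs_le]
  constructor
  · have := hstep.neg.le_one hk hε hm hnn (fun j => neg_le.mpr (abs_le.mp (hv j)).1) i
    exact neg_le.mp this
  · exact hstep.le_one hk hε hm hnn (fun j => (abs_le.mp (hv j)).2) i

/-- Discrete maximum principle (Theorem 3.2) in nodal (graph) form: the modified
fully implicit scheme for the Allen–Cahn equation preserves the bound `|u| ≤ 1`. -/
theorem stmt_8 (ι : Type*) [Fintype ι] (k ε : ℝ) (hk : 0 < k) (hε : 0 < ε)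
    (m : ι → ℝ) (hm : ∀ i, 0 < m i)
    (w : ι → ι → ℝ) (hsymm : ∀ i j, w i j = w j i) (hnn : ∀ i j, 0 ≤ w i j)
    (u v : ι → ℝ)
    (hscheme : ∀ i, m i / k * (u i - v i) + (∑ j, w i j * (u i - u j))
      + m i / ε ^ 2 * ((u i) ^ 3 - u i) = 0)
    (hv : ∀ i, |v i| ≤ 1) :
    ∀ i, |u i| ≤ 1 :=
  stmt_8_general ι k ε hk hε m hm w hnn u v hscheme hv
end

section
/- Let ι be a finite index set, let k > 0 and ε > 0 with γ = k/ε² < 1, let m : ι → ℝ satisfy m(i) > 0 for all i, let A be a symmetric positive semidefinite real matrix indexed by ι, and let u : ι → ℝ satisfy |u(i)| ≤ 1 for all i. Define ℓ(v) = (1/k)Σ_i m(i)v(i)² + vᵀAv + (1/ε²)Σ_i m(i)(3u(i)² − 1)v(i)² and b(v) = ((1 − γ)/k)Σ_i m(i)v(i)² + vᵀAv. Then for every v : ι → ℝ, b(v) ≤ ℓ(v) ≤ ((1 + 2γ)/(1 − γ)) b(v). In particular the generalized condition number of the preconditioned operator B·L, with B the inverse of the operator represented by b, is at most (1 + 2γ)/(1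 − γ). -/
open Finset Matrix

/-!
Write `S = ∑ mᵢvᵢ²`, `T = ∑ mᵢuᵢ²vᵢ²` and `Q = vᵀAv`. Since `1/ε² = γ/k`, the reaction term
`(1/ε²)∑ mᵢ(3uᵢ² − 1)vᵢ²` equals `(γ/k)(3T − S)`, so `ℓ(v) = b(v) + 3(γ/k)T`. The bound
`|uᵢ| ≤ 1` gives `0 ≤ T ≤ S`, and `Q ≥ 0` gives `S/k ≤ b(v)/(1 − γ)`; hence
`b(v) ≤ ℓ(v) ≤ b(v) + 3γ b(v)/(1 − γ) = (1 + 2γ)/(1 − γ) · b(v)`.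
-/

theorem sum_mul_sq_mul_sq_le_sum_mul_sq {ι : Type*} [Fintype ι] {m u : ι → ℝ}
    (hm : ∀ i, 0 ≤ m i) (hu : ∀ i, |u i| ≤ 1) (v : ι → ℝ) :
    ∑ i, m i * u i ^ 2 * v i ^ 2 ≤ ∑ i, m i * v i ^ 2 := by
  refine sum_le_sum fun i _ => ?_
  have hu2 : u i ^ 2 ≤ 1 := by simpa using sq_le_sq' (abs_le.mp (hu i)).1 (abs_le.mp (hu i)).2
  calc m i * u i ^ 2 * v i ^ 2 = m i * v i ^ 2 * u i ^ 2 := by ring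
    _ ≤ m i * v i ^ 2 * 1 := by gcongr; exact mul_nonneg (hm i) (sq_nonneg _)
    _ = m i * v i ^ 2 := mul_one _

theorem spectral_equivalence_bounds {γ a q t : ℝ} (hγ0 : 0 ≤ γ) (hγ1 : γ < 1) (hq : 0 ≤ q)
    (ht0 : 0 ≤ t) (hta : t ≤ a) :
    (1 - γ) * a + q ≤ (1 - γ) * a + q + 3 * γ * t ∧
      (1 - γ) * a + q + 3 * γ * t ≤ (1 + 2 * γ) / (1 - γ) * ((1 - γ) * a + q) := by
  have h1γ : 0 < 1 - γ := sub_pos.mpr hγ1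
  refine ⟨le_add_of_nonneg_right (by positivity), ?_⟩
  rw [div_mul_eq_mul_div, le_div_iff₀ h1γ]
  nlinarith [mul_nonneg (mul_nonneg hγ0 h1γ.le) (sub_nonneg.mpr hta), mul_nonneg hγ0 hq]

theorem stmt_12_general (ι : Type*) [Fintype ι]
    (k ε γ : ℝ) (hk : 0 < k) (hγ : γ = k / ε ^ 2) (hγ1 : γ < 1)
    (m : ι → ℝ) (hm : ∀ i, 0 < m i)
    (A : Matrix ι ι ℝ) (hA : A.PosSemidef)
    (u : ι → ℝ) (hu : ∀ i, |u i| ≤ 1)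
    (ℓ b : (ι → ℝ) → ℝ)
    (hℓ : ∀ v, ℓ v = 1 / k * (∑ i, m i * (v i) ^ 2) + v ⬝ᵥ (A *ᵥ v)
      + 1 / ε ^ 2 * (∑ i, m i * (3 * (u i) ^ 2 - 1) * (v i) ^ 2))
    (hb : ∀ v, b v = (1 - γ) / k * (∑ i, m i * (v i) ^ 2) + v ⬝ᵥ (A *ᵥ v)) :
    ∀ v : ι → ℝ, b v ≤ ℓ v ∧ ℓ v ≤ (1 + 2 * γ) / (1 - γ) * b v := by
  intro v
  set S := ∑ i, m i * v i ^ 2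
  set T := ∑ i, m i * u i ^ 2 * v i ^ 2
  have hε : 1 / ε ^ 2 = γ / k := by rw [hγ, div_div_cancel_left' hk.ne', one_div]
  have hreaction : ∑ i, m i * (3 * u i ^ 2 - 1) * v i ^ 2 = 3 * T - S := by
    rw [mul_sum, ← sum_sub_distrib]
    exact sum_congr rfl fun i _ => by ring
  have hbv : b v = (1 - γ) * (S / k) + v ⬝ᵥ (A *ᵥ v) := by rw [hb]; ring
  have hℓv : ℓ v = b v + 3 * γ * (T / k) := by rw [hℓ, hreaction, hε, hbv]; ring
  rw [hℓv, hbv]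
  refine spectral_equivalence_bounds (by rw [hγ]; positivity) hγ1
    (by simpa using hA.dotProduct_mulVec_nonneg v)
    (div_nonneg (sum_nonneg fun i _ => by have := hm i; positivity) hk.le)
    (div_le_div_of_nonneg_right (sum_mul_sq_mul_sq_le_sum_mul_sq (fun i => (hm i).le) hu v) hk.le)

/-- Theorem 3.4 in nodal (matrix) form: spectral equivalence between the Newton
linearization `ℓ` and the Poisson-like preconditioner form `b`, giving
`κ(B·L) ≤ (1 + 2γ)/(1 − γ)`. -/
theorem stmt_12 (ι : Type*) [Fintype ι] [DecidableEq ι]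
    (k ε γ : ℝ) (hk : 0 < k) (hε : 0 < ε) (hγ : γ = k / ε ^ 2) (hγ1 : γ < 1)
    (m : ι → ℝ) (hm : ∀ i, 0 < m i)
    (A : Matrix ι ι ℝ) (hA : A.PosSemidef)
    (u : ι → ℝ) (hu : ∀ i, |u i| ≤ 1)
    (ℓ b : (ι → ℝ) → ℝ)
    (hℓ : ∀ v, ℓ v = 1 / k * (∑ i, m i * (v i) ^ 2) + v ⬝ᵥ (A *ᵥ v)
      + 1 / ε ^ 2 * (∑ i, m i * (3 * (u i) ^ 2 - 1) * (v i) ^ 2))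
    (hb : ∀ v, b v = (1 - γ) / k * (∑ i, m i * (v i) ^ 2) + v ⬝ᵥ (A *ᵥ v)) :
    ∀ v : ι → ℝ, b v ≤ ℓ v ∧ ℓ v ≤ (1 + 2 * γ) / (1 - γ) * b v :=
  stmt_12_general ι k ε γ hk hγ hγ1 m hm A hA u hu ℓ b hℓ hb
end
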